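/- arXiv:1810.07688 — 3 statements merged into one kernel-verified Lean document; each statement's English description precedes it below -/
import Mathlib

section
/- Let X be a nondegenerate indecomposable continuum. Then every composant of X is a first-category (meager) subset of X. -/
/-!
A proper subcontinuum `K` of an indecomposable continuum `X` has empty interior: otherwise
`F = X \ int K` is a proper closed set with `frontier F ⊆ K`, and by boundary bumping every
component of `F` meets `K`. If `F` is connected, `X = K ∪ F`; if `F = (F ∩ u) ∪ (F ∩ v)` is
split by disjoint closed sets, then `K ∪ (F ∩ u)` and `K ∪ (F ∩ v)` are subcontinua, proper
because `F = closure (X \ K)`. Either way `X` decomposes.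

Every proper subcontinuum through `x` misses some member `U` of a countable basis, and so lies in
the component of `x` in `X \ U`, a proper subcontinuum and hence nowhere dense. The composant of
`x` is therefore covered by countably many nowhere dense sets.
-/

/-- The composant of a point `x`: the union of all proper subcontinua containing `x`. -/
def composant {X : Type*} [TopologicalSpace X] (x : X) : Set X :=
  ⋃₀ {K : Set X | IsCompact K ∧ IsConnected K ∧ K ≠ Set.univ ∧ x ∈ K}

/-- A continuum (viewed as a whole space) is indecomposable if it is not the union
of two proper subcontinua. -/
def IndecomposableSpace (X : Type*) [TopologicalSpace X] : Prop :=
  ¬ ∃ K L : Set X, IsCompact K ∧ IsConnected K ∧ K ≠ Set.univ ∧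
      IsCompact L ∧ IsConnected L ∧ L ≠ Set.univ ∧ K ∪ L = Set.univ

open Set Topology Filter TopologicalSpace

section

variable {X : Type*} [TopologicalSpace X]

theorem isClosed_connectedComponentIn {F : Set X} (hF : IsClosed F) (x : X) :
    IsClosed (connectedComponentIn F x) := by
  by_cases hx : x ∈ F
  · rw [connectedComponentIn_eq_image hx]
    exact hF.isClosedMap_subtype_val _ isClosed_connectedComponent
  · rw [connectedComponentIn_eq_empty hx]
    exact isClosed_empty

theorem exists_isClopen_mem_disjoint_of_disjoint_connectedComponent [CompactSpace X] [T2Space X]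
    {B : Set X} (hB : IsClosed B) {x : X} (h : Disjoint B (connectedComponent x)) :
    ∃ U, IsClopen U ∧ x ∈ U ∧ Disjoint B U := by
  rw [connectedComponent_eq_iInter_isClopen, disjoint_iff_inter_eq_empty] at h
  obtain ⟨t, ht⟩ := hB.isCompact.elim_finite_subfamily_closed
    (fun s : { s : Set X // IsClopen s ∧ x ∈ s } => (s : Set X)) (fun s => s.2.1.1) h
  exact ⟨⋂ s ∈ t, (s : Set X), isClopen_biInter_finset fun s _ => s.2.1,
    mem_iInter₂.mpr fun s _ => s.2.2, disjoint_iff_inter_eq_empty.mpr ht⟩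

theorem IsClosed.connectedComponentIn_inter_frontier_nonempty [CompactSpace X] [T2Space X]
    [PreconnectedSpace X] {F : Set X} (hF : IsClosed F) (hFne : F ≠ univ) {p : X} (hp : p ∈ F) :
    (connectedComponentIn F p ∩ frontier F).Nonempty := by
  have : CompactSpace F := isCompact_iff_compactSpace.mp hF.isCompact
  by_contra h
  have hdisj : Disjoint ((↑) ⁻¹' frontier F : Set F) (connectedComponent ⟨p, hp⟩) := by
    rw [Set.disjoint_iff]
    rintro z ⟨hzB, hzC⟩
    exact h ⟨z, by rw [connectedComponentIn_eq_image hp]; exact mem_image_of_mem _ hzC, hzB⟩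
  obtain ⟨U, hU, hpU, hUB⟩ := exists_isClopen_mem_disjoint_of_disjoint_connectedComponent
    (isClosed_frontier.preimage continuous_subtype_val) hdisj
  have hUopen : IsOpen ((↑) '' U : Set X) := by
    refine isOpen_iff_mem_nhds.mpr ?_
    rintro _ ⟨z, hz, rfl⟩
    have hzint : (z : X) ∈ interior F := by
      by_contra hzF
      exact hUB.notMem_of_mem_left ⟨subset_closure z.2, hzF⟩ hz
    rw [← nhdsWithin_eq_nhds.mpr (mem_interior_iff_mem_nhds.mp hzint), ← map_nhds_subtype_val]
    exact image_mem_map (hU.isOpen.mem_nhds hz)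
  have hUuniv : ((↑) '' U : Set X) = univ :=
    IsClopen.eq_univ ⟨hF.isClosedMap_subtype_val _ hU.isClosed, hUopen⟩ ⟨p, _, hpU, rfl⟩
  exact hFne (eq_univ_of_univ_subset (hUuniv ▸ Subtype.coe_image_subset F U))

theorem isPreconnected_union_inter_of_frontier_subset [CompactSpace X] [T2Space X]
    [PreconnectedSpace X] {K F u v : Set X} (hK : IsConnected K) (hF : IsClosed F)
    (hFne : F ≠ univ) (hFK : frontier F ⊆ K) (hu : IsClosed u) (hv : IsClosed v)
    (hFuv : F ⊆ u ∪ v) (huv : Disjoint u v) : IsPreconnected (K ∪ (F ∩ u)) := by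
  obtain ⟨k, hk⟩ := hK.nonempty
  refine isPreconnected_of_forall k fun y hy => ?_
  rcases hy with hyK | ⟨hyF, hyu⟩
  · exact ⟨K, subset_union_left, hk, hyK, hK.isPreconnected⟩
  have hCu : connectedComponentIn F y ⊆ F ∩ u := by
    have hC := isPreconnected_connectedComponentIn (F := F) (x := y)
    have hCF := connectedComponentIn_subset F y
    have hyC := mem_connectedComponentIn hyF
    rcases isPreconnected_iff_subset_of_disjoint_closed.mp hC u v hu hv (hCF.trans hFuv)
      (by rw [huv.inter_eq, inter_empty]) with hCu | hCv
    · exact subset_inter hCF hCu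
    · exact absurd (hCv hyC) (huv.notMem_of_mem_left hyu)
  obtain ⟨w, hwC, hwF⟩ := hF.connectedComponentIn_inter_frontier_nonempty hFne hyF
  exact ⟨K ∪ connectedComponentIn F y, union_subset_union_right K hCu, Or.inl hk,
    Or.inr (mem_connectedComponentIn hyF),
    hK.isPreconnected.union w (hFK hwF) hwC isPreconnected_connectedComponentIn⟩

theorem IndecomposableSpace.interior_eq_empty [CompactSpace X] [T2Space X] [PreconnectedSpace X]
    (hX : IndecomposableSpace X) {K : Set X} (hKc : IsCompact K) (hK : IsConnected K)
    (hKne : K ≠ univ) : interior K = ∅ := by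
  by_contra hint
  set F := (interior K)ᶜ
  have hF : IsClosed F := isOpen_interior.isClosed_compl
  have hFne : F ≠ univ := fun h => hint (compl_univ_iff.mp h)
  have hFK : frontier F ⊆ K := by
    rw [frontier_compl]
    exact frontier_subset_closure.trans (closure_minimal interior_subset hKc.isClosed)
  have hKcF : Kᶜ ⊆ F := compl_subset_compl.mpr interior_subset
  have hKF : K ∪ F = univ := compl_subset_iff_union.mp hKcF
  by_cases hFconn : IsPreconnected F
  · exact hX ⟨K, F, hKc, hK, hKne, hF.isCompact,
      ⟨(nonempty_compl.mpr hKne).mono hKcF, hFconn⟩, hFne, hKF⟩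
  obtain ⟨u, v, hu, hv, hFuv, huv, hFu, hFv⟩ : ∃ u v, IsClosed u ∧ IsClosed v ∧ F ⊆ u ∪ v ∧
      Disjoint u v ∧ ¬F ⊆ u ∧ ¬F ⊆ v := by
    simpa [isPreconnected_iff_subset_of_fully_disjoint_closed hF] using hFconn
  have piece : ∀ u v, IsClosed u → IsClosed v → F ⊆ u ∪ v → Disjoint u v → ¬F ⊆ u →
      IsCompact (K ∪ (F ∩ u)) ∧ IsConnected (K ∪ (F ∩ u)) ∧ K ∪ (F ∩ u) ≠ univ := by
    intro u v hu hv hFuv huv hFu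
    refine ⟨hKc.union (hF.inter hu).isCompact, ⟨hK.nonempty.mono subset_union_left,
      isPreconnected_union_inter_of_frontier_subset hK hF hFne hFK hu hv hFuv huv⟩, ?_⟩
    -- `F = closure Kᶜ`, so the nonempty relatively open set `F \ u` meets `Kᶜ`.
    obtain ⟨z, hzK, hzu⟩ : (Kᶜ ∩ uᶜ).Nonempty := by
      rw [← closure_inter_open_nonempty_iff hu.isOpen_compl, closure_compl]
      exact not_subset.mp hFu
    exact ne_univ_iff_exists_notMem _ |>.mpr ⟨z, by rintro (h | ⟨-, h⟩) <;> contradiction⟩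
  obtain ⟨hAc, hA, hAne⟩ := piece u v hu hv hFuv huv hFu
  obtain ⟨hBc, hB, hBne⟩ := piece v u hv hu (union_comm u v ▸ hFuv) huv.symm hFv
  refine hX ⟨_, _, hAc, hA, hAne, hBc, hB, hBne, ?_⟩
  rw [union_union_union_comm, union_self, ← inter_union_distrib_left, inter_eq_left.mpr hFuv, hKF]

theorem IndecomposableSpace.isNowhereDense_connectedComponentIn [CompactSpace X] [T2Space X]
    [PreconnectedSpace X] (hX : IndecomposableSpace X) {U : Set X} (hU : IsOpen U)
    (hUne : U.Nonempty) (x : X) : IsNowhereDense (connectedComponentIn Uᶜ x) := by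
  by_cases hx : x ∈ Uᶜ
  · have hC := isClosed_connectedComponentIn hU.isClosed_compl x
    rw [hC.isNowhereDense_iff]
    refine hX.interior_eq_empty hC.isCompact (isConnected_connectedComponentIn_iff.mpr hx) ?_
    intro h
    obtain ⟨y, hy⟩ := hUne
    exact connectedComponentIn_subset Uᶜ x (h ▸ mem_univ y) hy
  · rw [connectedComponentIn_eq_empty hx]
    exact isNowhereDense_empty

theorem composant_subset_biUnion_connectedComponentIn [T2Space X] [SecondCountableTopology X]
    (x : X) :
    composant x ⊆ ⋃ U ∈ countableBasis X, connectedComponentIn Uᶜ x := by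
  rintro y ⟨K, ⟨hKc, hK, hKne, hxK⟩, hyK⟩
  obtain ⟨p, hp⟩ := nonempty_compl.mpr hKne
  obtain ⟨U, hU, -, hUK⟩ := (isBasis_countableBasis X).exists_subset_of_mem_open
    hp hKc.isClosed.isOpen_compl
  exact mem_biUnion hU
    (hK.isPreconnected.subset_connectedComponentIn hxK (subset_compl_comm.mp hUK) hyK)

end

theorem stmt5_general {X : Type*} [MetricSpace X] [CompactSpace X] [ConnectedSpace X]
    (hX : IndecomposableSpace X) (x : X) :
    IsMeagre (composant x) :=
  (isMeagre_biUnion (countable_countableBasis X) fun _ hU =>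
      (hX.isNowhereDense_connectedComponentIn (isOpen_of_mem_countableBasis hU)
        (nonempty_of_mem_countableBasis hU) x).isMeagre).mono
    (composant_subset_biUnion_connectedComponentIn x)

theorem stmt5 {X : Type*} [MetricSpace X] [CompactSpace X] [ConnectedSpace X]
    [Nontrivial X] (hX : IndecomposableSpace X) (x : X) :
    IsMeagre (composant x) :=
  stmt5_general hX x
end

section
/- Let Q be a continuum and ψ: Q → P a continuous surjection onto an indecomposable continuum P. Suppose there exists a dense subset I ⊆ Q such that ψ⁻¹(ψ(x)) = {x} for all x ∈ I. Then Q is indecomposable. -/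
open Set

lemma subset_of_image_eq_univ_of_fiber_eq_singleton {X Y : Type*} {ψ : X → Y} {I L : Set X}
    (hsing : ∀ x ∈ I, ψ ⁻¹' {ψ x} = {x}) (hLim : ψ '' L = univ) : I ⊆ L := by
  intro x hx
  obtain ⟨y, hyL, hyx⟩ : ψ x ∈ ψ '' L := hLim ▸ mem_univ _
  have hy : y ∈ ψ ⁻¹' {ψ x} := hyx
  rw [hsing x hx, mem_singleton_iff] at hy
  exact hy ▸ hyL

lemma eq_univ_of_isClosed_of_image_eq_univ {X Y : Type*} [TopologicalSpace X] {ψ : X → Y}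
    {I L : Set X} (hI : Dense I) (hsing : ∀ x ∈ I, ψ ⁻¹' {ψ x} = {x}) (hL : IsClosed L)
    (hLim : ψ '' L = univ) : L = univ :=
  univ_subset_iff.mp <| hI.closure_eq ▸
    hL.closure_subset_iff.mpr (subset_of_image_eq_univ_of_fiber_eq_singleton hsing hLim)

theorem stmt10_general {Q P : Type*} [MetricSpace Q]
    [MetricSpace P]
    (ψ : Q → P) (hc : Continuous ψ) (hs : Function.Surjective ψ)
    (hP : IndecomposableSpace P)
    (I : Set Q) (hI : Dense I) (hsing : ∀ x ∈ I, ψ ⁻¹' {ψ x} = {x}) :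
    IndecomposableSpace Q := by
  rintro ⟨K, L, hKc, hKconn, hKne, hLc, hLconn, hLne, hU⟩
  have image_ne_univ {M : Set Q} (hM : IsCompact M) (hne : M ≠ univ) : ψ '' M ≠ univ :=
    fun him ↦ hne (eq_univ_of_isClosed_of_image_eq_univ hI hsing hM.isClosed him)
  refine hP ⟨ψ '' K, ψ '' L, hKc.image hc, hKconn.image ψ hc.continuousOn, image_ne_univ hKc hKne,
    hLc.image hc, hLconn.image ψ hc.continuousOn, image_ne_univ hLc hLne, ?_⟩
  rw [← image_union, hU, image_univ, range_eq_univ.mpr hs]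

theorem stmt10 {Q P : Type*} [MetricSpace Q] [CompactSpace Q] [ConnectedSpace Q]
    [MetricSpace P] [CompactSpace P] [ConnectedSpace P]
    (ψ : Q → P) (hc : Continuous ψ) (hs : Function.Surjective ψ)
    (hP : IndecomposableSpace P)
    (I : Set Q) (hI : Dense I) (hsing : ∀ x ∈ I, ψ ⁻¹' {ψ x} = {x}) :
    IndecomposableSpace Q :=
  stmt10_general ψ hc hs hP I hI hsing
end

section
/- Let X be a compact metric space, g: X → X a homeomorphism, and A ⊆ X a closed set with diam(gⁿ(A)) → 0 as |n| → ∞, and assume the sets gⁿ(A), n ∈ ℤ, are pairwise disjoint. Define the relation x ∼ y iff x = y or there exists n ∈ ℤ with x, y ∈ gⁿ(A). Then ∼ is a closed equivalence relation on X (i.e., its graph is closed in X × X). -/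
/-- The `n`-th iterate (n ∈ ℤ) of a homeomorphism. -/
def hiter {X : Type*} [TopologicalSpace X] (g : X ≃ₜ X) (n : ℤ) : X → X :=
  ⇑(g.toEquiv ^ n)

/-!
The graph of `∼` is the diagonal together with the squares `Sₙ × Sₙ`, `Sₙ = gⁿ(A)`.
Disjointness of the `Sₙ` is exactly what makes `∼` transitive. For closedness, take `(x, y)`
off the graph and `ε = dist x y / 3`: only finitely many `Sₙ` have diameter `≥ ε`, and their
closed squares miss `(x, y)`, while a square of diameter `< ε` cannot meet
`ball x ε × ball y ε`.
-/

open Function Set Filter Topology Metric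

lemma hiter_eq_coe_zpow {X : Type*} [TopologicalSpace X] (g : X ≃ₜ X) (n : ℤ) :
    hiter g n = ⇑(g ^ n) := by
  let toPerm : (X ≃ₜ X) →* Equiv.Perm X :=
    { toFun := Homeomorph.toEquiv, map_one' := rfl, map_mul' := fun _ _ => rfl }
  exact congrArg DFunLike.coe (map_zpow toPerm g n).symm

section GlueRel

variable {ι X : Type*}

def GlueRel (S : ι → Set X) (x y : X) : Prop :=
  x = y ∨ ∃ i, x ∈ S i ∧ y ∈ S i

theorem glueRel_equivalence {S : ι → Set X} (hS : Pairwise (Disjoint on S)) :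
    Equivalence (GlueRel S) where
  refl _ := Or.inl rfl
  symm
    | Or.inl h => Or.inl h.symm
    | Or.inr ⟨i, hx, hy⟩ => Or.inr ⟨i, hy, hx⟩
  trans
    | Or.inl rfl, h => h
    | h, Or.inl rfl => h
    | Or.inr ⟨i, hx, hy⟩, Or.inr ⟨j, hy', hz⟩ => by
      obtain rfl : i = j := hS.eq (not_disjoint_iff.mpr ⟨_, hy, hy'⟩)
      exact Or.inr ⟨i, hx, hz⟩

theorem setOf_glueRel (S : ι → Set X) :
    {p : X × X | GlueRel S p.1 p.2} = diagonal X ∪ ⋃ i, S i ×ˢ S i := by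
  ext ⟨x, y⟩
  simp [GlueRel]

lemma sub_lt_dist_of_mem_ball_prod_ball [PseudoMetricSpace X] {x y : X} {ε : ℝ} {p : X × X}
    (hp : p ∈ ball x ε ×ˢ ball y ε) : dist x y - 2 * ε < dist p.1 p.2 := by
  obtain ⟨h₁, h₂⟩ := hp
  rw [mem_ball'] at h₁
  rw [mem_ball] at h₂
  linarith [dist_triangle4 x p.1 p.2 y]

theorem isClosed_setOf_glueRel [MetricSpace X] {S : ι → Set X}
    (hcl : ∀ i, IsClosed (S i)) (hbdd : ∀ i, Bornology.IsBounded (S i))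
    (hdiam : Tendsto (fun i => diam (S i)) cofinite (𝓝 0)) :
    IsClosed {p : X × X | GlueRel S p.1 p.2} := by
  rw [← isOpen_compl_iff, isOpen_iff_mem_nhds]
  rintro ⟨x, y⟩ hxy
  simp only [setOf_glueRel, mem_compl_iff, mem_union, mem_diagonal_iff, mem_iUnion,
    mem_prod, not_or, not_exists] at hxy
  obtain ⟨hne, hnot⟩ := hxy
  set ε := dist x y / 3 with hε_def
  have hε : 0 < ε := by positivity [dist_pos.mpr hne]
  have hlarge : {i | ¬ diam (S i) < ε}.Finite := hdiam.eventually (gt_mem_nhds hε)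
  have hnhds : (⋂ i ∈ {i | ¬ diam (S i) < ε}, (S i ×ˢ S i)ᶜ) ∩ ball x ε ×ˢ ball y ε
      ∈ 𝓝 (x, y) :=
    inter_mem ((biInter_mem hlarge).mpr fun i _ =>
      ((hcl i).prod (hcl i)).isOpen_compl.mem_nhds (hnot i))
      (prod_mem_nhds (ball_mem_nhds x hε) (ball_mem_nhds y hε))
  refine mem_of_superset hnhds ?_
  rintro p ⟨hfar, hball⟩
  have hsep := sub_lt_dist_of_mem_ball_prod_ball hball
  simp only [setOf_glueRel, mem_compl_iff, mem_union, mem_diagonal_iff, mem_iUnion, not_or,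
    not_exists]
  refine ⟨fun h => by rw [h, dist_self] at hsep; linarith, fun i hi => ?_⟩
  by_cases hsmall : diam (S i) < ε
  · exact absurd (dist_le_diam_of_mem (hbdd i) hi.1 hi.2) (by linarith)
  · exact mem_iInter₂.mp hfar i hsmall hi

end GlueRel

theorem stmt13 {X : Type*} [MetricSpace X] [CompactSpace X]
    (g : X ≃ₜ X) (A : Set X) (hAcl : IsClosed A)
    (hdisj : Pairwise fun m n : ℤ => Disjoint (hiter g m '' A) (hiter g n '' A))
    (hdiam : Filter.Tendsto (fun n : ℤ => Metric.diam (hiter g n '' A))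
      Filter.cofinite (nhds 0))
    (r : X → X → Prop)
    (hr : ∀ x y, r x y ↔ (x = y ∨ ∃ n : ℤ, x ∈ hiter g n '' A ∧ y ∈ hiter g n '' A)) :
    Equivalence r ∧ IsClosed {p : X × X | r p.1 p.2} := by
  obtain rfl : r = GlueRel fun n => hiter g n '' A := by
    ext x y
    exact hr x y
  have hcompact (n : ℤ) : IsCompact (hiter g n '' A) := by
    rw [hiter_eq_coe_zpow]
    exact hAcl.isCompact.image (g ^ n).continuous
  exact ⟨glueRel_equivalence hdisj, isClosed_setOf_glueRel (fun n => (hcompact n).isClosed)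
    (fun n => (hcompact n).isBounded) hdiam⟩
end
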